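/- arXiv:2512.05942 — 3 statements merged into one kernel-verified Lean document; each statement's English description precedes it below -/
import Mathlib

section
/- Let x be a stable g-matching, w ∈ W, and (c, a) a legal w-pair under x. Let d ∈ (U_F^+(x) ∩ E_w) − {a} be interesting for w under z := x_w + 1^a − 1^c. Then (c, d) is also a legal w-pair under x, and x_w + 1^d − 1^c ≻_w z. -/
namespace SGMMStmt

/-- Data of the stable g-matching model: a bipartite graph with worker side `W`,
firm side `F`, edge set `E` with endpoint maps `ew`, `ef`, integer capacities `b`,
and a choice function at every vertex (acting on vectors `E → ℕ`, only the
coordinates on edges incident to the vertex being relevant). -/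
structure Model (W F E : Type*) where
  ew : E → W
  ef : E → F
  b : E → ℕ
  Cw : W → (E → ℕ) → (E → ℕ)
  Cf : F → (E → ℕ) → (E → ℕ)

/-- An edge-simple closed alternating sequence `(a 0, c 0, a 1, c 1, …)`;
the data of a candidate rotation. -/
structure Cyc (E : Type*) where
  k : ℕ
  hk : 0 < k
  a : Fin k → E
  c : Fin k → E

/-- Cyclically next index. -/
def Cyc.nxt {E : Type*} (R : Cyc E) (i : Fin R.k) : Fin R.k :=
  ⟨(i.1 + 1) % R.k, Nat.mod_lt _ R.hk⟩

/-- Two cycles are the same (as cyclic sequences) if they differ by a cyclic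
shift of the indexing. -/
def Cyc.Same {E : Type*} (R R' : Cyc E) : Prop :=
  R.k = R'.k ∧ ∃ s : ℕ,
    (∀ i : Fin R.k, R'.a ⟨(i.1 + s) % R'.k, Nat.mod_lt _ R'.hk⟩ = R.a i) ∧
    (∀ i : Fin R.k, R'.c ⟨(i.1 + s) % R'.k, Nat.mod_lt _ R'.hk⟩ = R.c i)

/-- The signed incidence vector `χ^R`: `+1` on the `a`-edges, `-1` on the `c`-edges. -/
def Cyc.chi {E : Type*} [DecidableEq E] (R : Cyc E) (e : E) : ℤ :=
  (if ∃ i, R.a i = e then 1 else 0) - (if ∃ i, R.c i = e then 1 else 0)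

/-- The result `x + lam • χ^R` of shifting `x` along `R` with weight `lam`. -/
def Cyc.apply {E : Type*} [DecidableEq E] (R : Cyc E) (x : E → ℕ) (lam : ℕ) : E → ℕ :=
  fun e => ((x e : ℤ) + (lam : ℤ) * R.chi e).toNat

variable {W F E : Type*} [Fintype E] [DecidableEq E] [DecidableEq W] [DecidableEq F]

/-- Membership in the integer box `{z : E → ℕ | z ≤ b}`. -/
def inBox (b z : E → ℕ) : Prop := ∀ e, z e ≤ b e

/-- `e` is interesting under `x` (for the choice function `C`). -/
def Interesting (b : E → ℕ) (C : (E → ℕ) → (E → ℕ)) (x : E → ℕ) (e : E) : Prop :=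
  ∃ z', inBox b z' ∧ x e < z' e ∧ (∀ e', e' ≠ e → z' e' = x e') ∧ x e < C z' e

/-- `C` is a choice function for the coordinates `inc` (the star of a vertex),
obeying (A1) consistency, (A2) substitutability, (A3) size monotonicity;
it acts as the identity outside `inc` and depends only on the `inc`-coordinates. -/
structure IsCF (b : E → ℕ) (inc : E → Prop) [DecidablePred inc]
    (C : (E → ℕ) → (E → ℕ)) : Prop where
  le : ∀ z, inBox b z → C z ≤ z
  offId : ∀ z e, ¬ inc e → C z e = z e
  localDep : ∀ z z' : E → ℕ, (∀ e, inc e → z e = z' e) → ∀ e, inc e → C z e = C z' e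
  a1 : ∀ z z' : E → ℕ, inBox b z → z' ≤ z → C z ≤ z' → C z' = C z
  a2 : ∀ z z' : E → ℕ, inBox b z → z' ≤ z → C z ⊓ z' ≤ C z'
  a3 : ∀ z z' : E → ℕ, inBox b z → z' ≤ z →
    ∑ e ∈ Finset.univ.filter inc, C z' e ≤ ∑ e ∈ Finset.univ.filter inc, C z e

/-- `e` is incident to worker `w`. -/
def Model.incW (M : Model W F E) (w : W) (e : E) : Prop := M.ew e = w

/-- `e` is incident to firm `f`. -/
def Model.incF (M : Model W F E) (f : F) (e : E) : Prop := M.ef e = f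

instance (M : Model W F E) (w : W) : DecidablePred (M.incW w) :=
  fun e => inferInstanceAs (Decidable (M.ew e = w))

instance (M : Model W F E) (f : F) : DecidablePred (M.incF f) :=
  fun e => inferInstanceAs (Decidable (M.ef e = f))

/-- All choice functions of the model satisfy the axioms. -/
structure Model.Valid (M : Model W F E) : Prop where
  cfW : ∀ w : W, IsCF M.b (M.incW w) (M.Cw w)
  cfF : ∀ f : F, IsCF M.b (M.incF f) (M.Cf f)

/-- `x` is a g-matching: it lies in the box and is acceptable for every vertex. -/
def Model.IsGM (M : Model W F E) (x : E → ℕ) : Prop :=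
  inBox M.b x ∧ (∀ w, M.Cw w x = x) ∧ (∀ f, M.Cf f x = x)

/-- `e` is interesting for the worker `w` under `x`. -/
def Model.IntW (M : Model W F E) (w : W) (x : E → ℕ) (e : E) : Prop :=
  Interesting M.b (M.Cw w) x e

/-- `e` is interesting for the firm `f` under `x`. -/
def Model.IntF (M : Model W F E) (f : F) (x : E → ℕ) (e : E) : Prop :=
  Interesting M.b (M.Cf f) x e

/-- `e` blocks `x`: it is interesting for both of its endpoints. -/
def Model.Blocks (M : Model W F E) (x : E → ℕ) (e : E) : Prop :=
  M.IntW (M.ew e) x e ∧ M.IntF (M.ef e) x e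

/-- `x` is a stable g-matching. -/
def Model.Stable (M : Model W F E) (x : E → ℕ) : Prop :=
  M.IsGM x ∧ ∀ e, ¬ M.Blocks x e

/-- `e ∈ U_F^+(x)`: `e` is interesting for its `F`-endpoint under `x`. -/
def Model.UFpos (M : Model W F E) (x : E → ℕ) (e : E) : Prop :=
  M.IntF (M.ef e) x e

/-- `e ∈ U_F^-(x)`: `x e > 0` and `e` is not interesting for its `F`-endpoint under `x`. -/
def Model.UFneg (M : Model W F E) (x : E → ℕ) (e : E) : Prop :=
  0 < x e ∧ ¬ M.IntF (M.ef e) x e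

/-- `(a, c)` is a legal `f`-pair under `x`: distinct edges of `E_f` with
`C_f (x + 1^a) = x + 1^a - 1^c`. -/
def Model.LegalFPair (M : Model W F E) (x : E → ℕ) (f : F) (a c : E) : Prop :=
  M.incF f a ∧ M.incF f c ∧ a ≠ c ∧ x a < M.b a ∧
    M.Cf f (x + Pi.single a 1) + Pi.single c 1 = x + Pi.single a 1

/-- `(c, a)` is a legal `w`-pair under `x`: `c ∈ E_w ∩ U_F^-(x)`, `a ∈ E_w ∩ U_F^+(x)`,
and `x + 1^a - 1^c` is acceptable for `C_w`. -/
def Model.LegalWPair (M : Model W F E) (x : E → ℕ) (w : W) (c a : E) : Prop :=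
  M.incW w c ∧ M.incW w a ∧ c ≠ a ∧ M.UFneg x c ∧ M.UFpos x a ∧
    M.Cw w (x + Pi.single a 1 - Pi.single c 1) = x + Pi.single a 1 - Pi.single c 1

/-- `(c, a)` is an essential `w`-pair under `x`: a legal `w`-pair such that no edge
`d ∈ (U_F^+(x) ∩ E_w) - {a}` is interesting for `w` under `x + 1^a - 1^c`. -/
def Model.EssWPair (M : Model W F E) (x : E → ℕ) (w : W) (c a : E) : Prop :=
  M.LegalWPair x w c a ∧
    ∀ d, M.incW w d → M.UFpos x d → d ≠ a →
      ¬ M.IntW w (x + Pi.single a 1 - Pi.single c 1) d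

/-- The preference relation `x ≺_F y` (for the firm side), on the `E_f`-coordinates. -/
def Model.PrecF (M : Model W F E) (x y : E → ℕ) : Prop :=
  x ≠ y ∧ ∀ f e, M.incF f e → M.Cf f (x ⊔ y) e = y e

/-- `R` is a rotation applicable to `x`: an edge-simple alternating cycle whose
consecutive pairs are legal `f`-pairs and essential `w`-pairs under `x`. -/
def Model.IsRotation (M : Model W F E) (x : E → ℕ) (R : Cyc E) : Prop :=
  Function.Injective R.a ∧ Function.Injective R.c ∧ (∀ i j, R.a i ≠ R.c j) ∧
  (∀ i, M.ef (R.a i) = M.ef (R.c i) ∧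
    M.LegalFPair x (M.ef (R.a i)) (R.a i) (R.c i)) ∧
  (∀ i, M.ew (R.c i) = M.ew (R.a (R.nxt i)) ∧
    M.EssWPair x (M.ew (R.c i)) (R.c i) (R.a (R.nxt i)))

/-- `lam` is a feasible weight for `R` at `x`: every intermediate shift is stable. -/
def Model.Feasible (M : Model W F E) (x : E → ℕ) (R : Cyc E) (lam : ℕ) : Prop :=
  ∀ j, 1 ≤ j → j ≤ lam → M.Stable (R.apply x j)

/-- `t = τ_R(x)` is the maximal feasible weight for `R` at `x`. -/
def Model.IsMaxWeight (M : Model W F E) (x : E → ℕ) (R : Cyc E) (t : ℕ) : Prop :=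
  1 ≤ t ∧ M.Feasible x R t ∧ ∀ t', M.Feasible x R t' → t' ≤ t

/-- A route: a sequence of stable g-matchings, each obtained from the previous one
by shifting along an applicable rotation with a feasible positive weight. -/
structure Route (M : Model W F E) where
  N : ℕ
  xs : ℕ → E → ℕ
  rot : ℕ → Cyc E
  lam : ℕ → ℕ
  stable0 : M.Stable (xs 0)
  isrot : ∀ i < N, M.IsRotation (xs i) (rot i)
  lam_pos : ∀ i < N, 1 ≤ lam i
  feas : ∀ i < N, M.Feasible (xs i) (rot i) (lam i)
  step : ∀ i < N, xs (i + 1) = (rot i).apply (xs i) (lam i)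

/-- A route is non-excessive: if the same rotation (as a cycle) is used twice, the
earlier occurrence is used with its maximal feasible weight. -/
def Route.NonExcessive {M : Model W F E} (T : Route M) : Prop :=
  ∀ i j, i < j → j < T.N → (T.rot i).Same (T.rot j) →
    M.IsMaxWeight (T.xs i) (T.rot i) (T.lam i)

/-- A route is principal: every rotation is applied with its maximal feasible weight. -/
def Route.Principal {M : Model W F E} (T : Route M) : Prop :=
  ∀ i < T.N, M.IsMaxWeight (T.xs i) (T.rot i) (T.lam i)

open scoped Classical in
/-- The number of steps of the route using the rotation `R` (as a cycle) with weight `l`. -/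
noncomputable def Route.count {M : Model W F E} (T : Route M) (R : Cyc E) (l : ℕ) : ℕ :=
  ((Finset.range T.N).filter (fun i => (T.rot i).Same R ∧ T.lam i = l)).card


/-- Lemma 3.3: if `(c, a)` is a legal `w`-pair under a stable `x` and
`d ∈ (U_F^+(x) ∩ E_w) - {a}` is interesting for `w` under `z := x + 1^a - 1^c`,
then `(c, d)` is also a legal `w`-pair and `x + 1^d - 1^c ≻_w z`. -/
theorem statement4 (M : Model W F E) (hM : M.Valid)
    (x : E → ℕ) (hx : M.Stable x) (w : W) (c a : E)
    (hleg : M.LegalWPair x w c a)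
    (d : E) (hdw : M.incW w d) (hdU : M.UFpos x d) (hda : d ≠ a)
    (hint : M.IntW w (x + Pi.single a 1 - Pi.single c 1) d) :
    M.LegalWPair x w c d ∧
      M.Cw w ((x + Pi.single d 1 - Pi.single c 1) ⊔ (x + Pi.single a 1 - Pi.single c 1))
        = x + Pi.single d 1 - Pi.single c 1 := by
  obtain ⟨hgm, hstab⟩ := hx
  obtain ⟨hboxx, hCwx, _⟩ := hgm
  obtain ⟨hcw, haw, hca, hcU, haU, hacc⟩ := hleg
  have cf := hM.cfW w
  have hba : x a < M.b a := by
    obtain ⟨z', hzb, h1, -, -⟩ := haU; exact lt_of_lt_of_le h1 (hzb a)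
  have hbd : x d < M.b d := by
    obtain ⟨z', hzb, h1, -, -⟩ := hdU; exact lt_of_lt_of_le h1 (hzb d)
  have hxc : 0 < x c := hcU.1
  have hcd : c ≠ d := by rintro rfl; exact hcU.2 hdU
  have hac : a ≠ c := Ne.symm hca
  have had : a ≠ d := Ne.symm hda
  have hdc : d ≠ c := Ne.symm hcd
  have hnia : ¬ Interesting M.b (M.Cw w) x a := by
    intro h
    exact hstab a ⟨by rw [show M.ew a = w from haw]; exact h, haU⟩
  have hnid : ¬ Interesting M.b (M.Cw w) x d := by
    intro h
    exact hstab d ⟨by rw [show M.ew d = w from hdw]; exact h, hdU⟩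
  set z : E → ℕ := x + Pi.single a 1 - Pi.single c 1 with hzdef
  set z2 : E → ℕ := x + Pi.single d 1 - Pi.single c 1 with hz2def
  set y' : E → ℕ := x + Pi.single a 1 + Pi.single d 1 with hy'def
  set y : E → ℕ := y' - Pi.single c 1 with hydef
  -- pointwise values
  have hza : z a = x a + 1 := by simp [hzdef, Pi.single_apply, hac]
  have hzc : z c = x c - 1 := by simp [hzdef, Pi.single_apply, hca]
  have hzo : ∀ e, e ≠ a → e ≠ c → z e = x e := by
    intro e h1 h2; simp [hzdef, Pi.single_apply, h1, h2]
  have hz2d : z2 d = x d + 1 := by simp [hz2def, Pi.single_apply, hdc]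
  have hz2c : z2 c = x c - 1 := by simp [hz2def, Pi.single_apply, hcd]
  have hz2o : ∀ e, e ≠ d → e ≠ c → z2 e = x e := by
    intro e h1 h2; simp [hz2def, Pi.single_apply, h1, h2]
  have hy'a : y' a = x a + 1 := by simp [hy'def, Pi.single_apply, had]
  have hy'd : y' d = x d + 1 := by simp [hy'def, Pi.single_apply, hda]
  have hy'o : ∀ e, e ≠ a → e ≠ d → y' e = x e := by
    intro e h1 h2; simp [hy'def, Pi.single_apply, h1, h2]
  have hya : y a = x a + 1 := by simp [hydef, hy'def, Pi.single_apply, hac, had]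
  have hyd : y d = x d + 1 := by simp [hydef, hy'def, Pi.single_apply, hda, hdc]
  have hyc : y c = x c - 1 := by simp [hydef, hy'def, Pi.single_apply, hca, hcd]
  have hyo : ∀ e, e ≠ a → e ≠ d → e ≠ c → y e = x e := by
    intro e h1 h2 h3; simp [hydef, hy'def, Pi.single_apply, h1, h2, h3]
  have hxa1 : ((x + Pi.single a 1 : E → ℕ)) a = x a + 1 := by simp
  have hxd1 : ((x + Pi.single d 1 : E → ℕ)) d = x d + 1 := by simp
  -- basic order facts
  have hboxy' : inBox M.b y' := by
    intro e
    by_cases h1 : e = a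
    · rw [h1, hy'a]; omega
    by_cases h2 : e = d
    · rw [h2, hy'd]; omega
    · rw [hy'o e h1 h2]; exact hboxx e
  have hyley' : y ≤ y' := by
    intro e; rw [hydef]; exact Nat.sub_le _ _
  have hboxy : inBox M.b y := fun e => le_trans (hyley' e) (hboxy' e)
  have hxley' : x ≤ y' := by
    intro e; simp only [hy'def, Pi.add_apply]; omega
  have hxa_ley' : x + Pi.single a 1 ≤ y' := by
    intro e; simp only [hy'def, Pi.add_apply]; omega
  have hxd_ley' : x + Pi.single d 1 ≤ y' := by
    intro e; simp only [hy'def, Pi.add_apply, Pi.single_apply]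
    split_ifs <;> omega
  have hz2ley : z2 ≤ y := by
    intro e
    simp only [hz2def, hydef, hy'def, Pi.sub_apply, Pi.add_apply, Pi.single_apply]
    split_ifs <;> omega
  have hbox_xa : inBox M.b (x + Pi.single a 1) := fun e => le_trans (hxa_ley' e) (hboxy' e)
  have hbox_xd : inBox M.b (x + Pi.single d 1) := fun e => le_trans (hxd_ley' e) (hboxy' e)
  -- the star of w
  set s : Finset E := Finset.univ.filter (M.incW w) with hsdef
  have hcs : c ∈ s := by rw [hsdef]; simp only [Finset.mem_filter, Finset.mem_univ, true_and]; exact hcw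
  have hds : d ∈ s := by rw [hsdef]; simp only [Finset.mem_filter, Finset.mem_univ, true_and]; exact hdw
  -- C_w y' a ≤ x a and C_w y' d ≤ x d
  have hCy'a : M.Cw w y' a ≤ x a := by
    by_contra hgt
    push_neg at hgt
    have h2 := cf.a2 y' (x + Pi.single a 1) hboxy' hxa_ley' a
    rw [Pi.inf_apply] at h2
    have hCa : x a < M.Cw w (x + Pi.single a 1) a := by
      have h3 : x a + 1 ≤ M.Cw w y' a ⊓ (x + Pi.single a 1 : E → ℕ) a :=
        le_inf hgt (le_of_eq hxa1.symm)
      exact lt_of_lt_of_le (Nat.lt_succ_self _) (le_trans h3 h2)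
    refine hnia ⟨(x + Pi.single a 1 : E → ℕ), hbox_xa, ?_, ?_, hCa⟩
    · simp
    · intro e' he'; simp [Pi.single_apply, he']
  have hCy'd : M.Cw w y' d ≤ x d := by
    by_contra hgt
    push_neg at hgt
    have h2 := cf.a2 y' (x + Pi.single d 1) hboxy' hxd_ley' d
    rw [Pi.inf_apply] at h2
    have hCd : x d < M.Cw w (x + Pi.single d 1) d := by
      have h3 : x d + 1 ≤ M.Cw w y' d ⊓ (x + Pi.single d 1 : E → ℕ) d :=
        le_inf hgt (le_of_eq hxd1.symm)
      exact lt_of_lt_of_le (Nat.lt_succ_self _) (le_trans h3 h2)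
    refine hnid ⟨(x + Pi.single d 1 : E → ℕ), hbox_xd, ?_, ?_, hCd⟩
    · simp
    · intro e' he'; simp [Pi.single_apply, he']
  -- C_w y' = x
  have hCy'_le : ∀ e, M.Cw w y' e ≤ x e := by
    intro e
    by_cases h1 : e = a
    · rw [h1]; exact hCy'a
    by_cases h2 : e = d
    · rw [h2]; exact hCy'd
    · have := cf.le y' hboxy' e
      rwa [hy'o e h1 h2] at this
  have hsum_y' : ∑ e ∈ s, x e ≤ ∑ e ∈ s, M.Cw w y' e := by
    have h3 := cf.a3 y' x hboxy' hxley'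
    rw [hCwx w, ← hsdef] at h3
    exact h3
  have hCy' : M.Cw w y' = x := by
    have hle : ∀ e ∈ s, M.Cw w y' e ≤ x e := fun e _ => hCy'_le e
    have heq : ∑ e ∈ s, M.Cw w y' e = ∑ e ∈ s, x e :=
      le_antisymm (Finset.sum_le_sum hle) hsum_y'
    have hpt := (Finset.sum_eq_sum_iff_of_le hle).mp heq
    funext e
    by_cases h : M.incW w e
    · exact hpt e (by rw [hsdef]; simp only [Finset.mem_filter, Finset.mem_univ, true_and]; exact h)
    · have hea : e ≠ a := by rintro rfl; exact h haw
      have hed : e ≠ d := by rintro rfl; exact h hdw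
      rw [cf.offId y' e h, hy'o e hea hed]
  -- (C_w y) d = x d + 1
  obtain ⟨z1, hb1, hlt1, hoff1, hC1⟩ := hint
  have hzd : z d = x d := hzo d hda hdc
  rw [hzd] at hlt1 hC1
  have hylez1 : y ≤ z1 := by
    intro e
    by_cases h : e = d
    · rw [h, hyd]; exact hlt1
    · rw [hoff1 e h]
      by_cases h1 : e = a
      · rw [h1, hya, hza]
      by_cases h2 : e = c
      · rw [h2, hyc, hzc]
      · rw [hyo e h1 h h2, hzo e h1 h2]
  have hud : M.Cw w y d = x d + 1 := by
    have h2 := cf.a2 z1 y hb1 hylez1 d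
    rw [Pi.inf_apply] at h2
    have h3 : x d + 1 ≤ M.Cw w z1 d ⊓ y d := le_inf hC1 (by rw [hyd])
    have hle' := cf.le y hboxy d
    rw [hyd] at hle'
    exact le_antisymm hle' (le_trans h3 h2)
  -- C_w y ≥ x ⊓ y
  have hxiy : ∀ e, x e ⊓ y e ≤ M.Cw w y e := by
    have h3 := cf.a2 y' y hboxy' hyley'
    rw [hCy'] at h3
    intro e
    have h4 := h3 e
    rwa [Pi.inf_apply] at h4
  have hsumy : ∑ e ∈ s, M.Cw w y e ≤ ∑ e ∈ s, x e := by
    have h3 := cf.a3 y' y hboxy' hyley'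
    rw [hCy', ← hsdef] at h3
    exact h3
  -- z2 ≤ C_w y pointwise
  have hz2leu : ∀ e, z2 e ≤ M.Cw w y e := by
    intro e
    by_cases h1 : e = d
    · rw [h1, hz2d, hud]
    by_cases h2 : e = c
    · rw [h2, hz2c]
      have h5 := hxiy c; rw [hyc] at h5
      exact le_trans (le_inf (Nat.sub_le _ _) le_rfl) h5
    by_cases h3 : e = a
    · rw [h3, hz2o a had hac]
      have h5 := hxiy a; rw [hya] at h5
      exact le_trans (le_inf le_rfl (Nat.le_succ _)) h5
    · rw [hz2o e h1 h2]
      have h5 := hxiy e; rw [hyo e h3 h1 h2] at h5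
      exact le_trans (le_inf le_rfl le_rfl) h5
  -- ∑ z2 = ∑ x on s
  have hsz2 : ∑ e ∈ s, z2 e = ∑ e ∈ s, x e := by
    have hds' : d ∈ s.erase c := Finset.mem_erase.mpr ⟨hdc, hds⟩
    have h1 : ∀ f : E → ℕ, ∑ e ∈ s, f e = f c + (f d + ∑ e ∈ (s.erase c).erase d, f e) := by
      intro f
      rw [← Finset.add_sum_erase s f hcs, ← Finset.add_sum_erase _ f hds']
    rw [h1 z2, h1 x, hz2c, hz2d]
    have hcongr : ∑ e ∈ (s.erase c).erase d, z2 e = ∑ e ∈ (s.erase c).erase d, x e := by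
      apply Finset.sum_congr rfl
      intro e he
      exact hz2o e (Finset.mem_erase.mp he).1 (Finset.mem_erase.mp (Finset.mem_erase.mp he).2).1
    rw [hcongr]
    have hx1 : x c - 1 + 1 = x c := Nat.succ_pred_eq_of_pos hxc
    omega
  -- C_w y = z2
  have hle2 : ∀ e ∈ s, z2 e ≤ M.Cw w y e := fun e _ => hz2leu e
  have hsum_eq : ∑ e ∈ s, z2 e = ∑ e ∈ s, M.Cw w y e :=
    le_antisymm (Finset.sum_le_sum hle2) (by rw [hsz2]; exact hsumy)
  have hpt2 := (Finset.sum_eq_sum_iff_of_le hle2).mp hsum_eq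
  have hCy : M.Cw w y = z2 := by
    funext e
    by_cases h : M.incW w e
    · exact (hpt2 e (by rw [hsdef]; simp only [Finset.mem_filter, Finset.mem_univ, true_and]; exact h)).symm
    · have hea : e ≠ a := by rintro rfl; exact h haw
      have hed : e ≠ d := by rintro rfl; exact h hdw
      have hec : e ≠ c := by rintro rfl; exact h hcw
      rw [cf.offId y e h, hyo e hea hed hec, hz2o e hed hec]
  -- acceptability of z2
  have hCz2 : M.Cw w z2 = z2 := by
    have h1 := cf.a1 y z2 hboxy hz2ley (by rw [hCy])
    rw [h1, hCy]
  -- z2 ⊔ z = y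
  have hsup : z2 ⊔ z = y := by
    funext e
    rw [Pi.sup_apply]
    by_cases h1 : e = a
    · rw [h1, hz2o a had hac, hza, hya]; exact max_eq_right (Nat.le_succ _)
    by_cases h2 : e = d
    · rw [h2, hz2d, hzo d hda hdc, hyd]; exact max_eq_left (Nat.le_succ _)
    by_cases h3 : e = c
    · rw [h3, hz2c, hzc, hyc]; exact max_self _
    · rw [hz2o e h2 h3, hzo e h1 h3, hyo e h1 h2 h3]; exact max_self _
  refine ⟨⟨hcw, hdw, hcd, hcU, hdU, hCz2⟩, ?_⟩
  rw [hsup]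
  exact hCy

end SGMMStmt
end

section
/- Let x be a stable g-matching, w ∈ W, and c ∈ E_w ∩ U_F^-(x). If there exists at least one legal w-pair of the form (c, a') under x, then there exists a unique edge a ∈ E_w such that (c, a) is a legal w-pair under x and no edge d ∈ (U_F^+(x) ∩ E_w) − {a} is interesting for w under x_w + 1^a − 1^c (i.e., a unique essential w-pair (c, a)). -/
namespace SGMMStmt

variable {W F E : Type*} [Fintype E] [DecidableEq E] [DecidableEq W] [DecidableEq F]

/-!
Write `p = x - 1^c`, `D = E_w ∩ U_F^+(x)` and `u = p + 1_D`. Stability says no edge of `D` is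
interesting for `w` at `x`, so substitutability gives `C_w(x + 1_D) = x`, and hence `p ≤ C_w(u)`.
Size monotonicity squeezes `|C_w(u)|` between `|C_w(p + 1^{a'})| = |x|` for the given legal pair
and `|C_w(x + 1_D)| = |x|`, so `C_w(u) = p + 1^a` for exactly one `a ∈ D`. This `a` is the
essential partner of `c`: `p + 1^a` is acceptable by consistency; an edge `d ∈ D` interesting at
`p + 1^a` would make `|C_w(p + 1^a + 1^d)| > |C_w(u)|`; and at `p + 1^{a''}` for any other legal
`a''`, the edge `a` is interesting because `C_w(u)` takes it.
-/

theorem exists_eq_add_one_of_sum_eq_sum_add_one {ι : Type*} {s : Finset ι} {f g : ι → ℕ}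
    (hle : ∀ i ∈ s, g i ≤ f i) (hsum : ∑ i ∈ s, f i = ∑ i ∈ s, g i + 1) :
    ∃ a ∈ s, f a = g a + 1 ∧ ∀ i ∈ s, i ≠ a → f i = g i := by
  classical
  have hdiff : ∑ i ∈ s, (f i - g i) = 1 := by
    rw [Finset.sum_tsub_distrib _ hle, hsum]; omega
  obtain ⟨a, ha, hne⟩ := Finset.exists_ne_zero_of_sum_ne_zero (hdiff ▸ one_ne_zero)
  have hsplit := Finset.add_sum_erase s (fun i => f i - g i) ha
  have hrest : ∑ i ∈ s.erase a, (f i - g i) = 0 := by omega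
  refine ⟨a, ha, by have := hle a ha; omega, fun i hi hia => ?_⟩
  have := Finset.sum_eq_zero_iff.1 hrest i (Finset.mem_erase.2 ⟨hia, hi⟩)
  have := hle i hi
  omega

theorem sum_filter_add_single {inc : E → Prop} [DecidablePred inc] {a : E} (ha : inc a)
    (z : E → ℕ) :
    ∑ e ∈ Finset.univ.filter inc, (z + Pi.single a 1 : E → ℕ) e
      = ∑ e ∈ Finset.univ.filter inc, z e + 1 := by
  simp [Finset.sum_add_distrib, ha]

theorem inBox_add_indicator {ι : Type*} {b x : ι → ℕ} {D : Set ι} (hx : inBox b x)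
    (hD : ∀ e ∈ D, x e < b e) : inBox b (x + D.indicator 1) := by
  classical
  intro e
  by_cases he : e ∈ D
  · simpa [he] using hD e he
  · simpa [he] using hx e

theorem single_le_indicator {ι : Type*} [DecidableEq ι] {D : Set ι} {a : ι} (ha : a ∈ D) :
    (Pi.single a 1 : ι → ℕ) ≤ D.indicator 1 := by
  classical
  intro e
  rcases eq_or_ne e a with rfl | hea
  · simp [ha]
  · simp [hea]

theorem single_add_single_le_indicator {ι : Type*} [DecidableEq ι] {D : Set ι} {a d : ι}
    (ha : a ∈ D) (hd : d ∈ D) (had : a ≠ d) :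
    (Pi.single a 1 + Pi.single d 1 : ι → ℕ) ≤ D.indicator 1 := by
  classical
  intro e
  rcases eq_or_ne e a with rfl | hea
  · simp [ha, had]
  · rcases eq_or_ne e d with rfl | hed
    · simp [hd, hea]
    · simp [hea, hed]

namespace IsCF

variable {b : E → ℕ} {inc : E → Prop} [DecidablePred inc] {C : (E → ℕ) → (E → ℕ)}

theorem interesting_of_lt (hC : IsCF b inc C) {z y : E → ℕ} {e : E} (hz : inBox b z)
    (hle : y + Pi.single e 1 ≤ z) (h : y e < C z e) : Interesting b C y e := by
  have hbump := (le_inf (by simpa using h) le_rfl).trans (hC.a2 z _ hz hle e)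
  refine ⟨y + Pi.single e 1, fun e' => (hle e').trans (hz e'), by simp, ?_, by simpa using hbump⟩
  intro e' he'
  simp [he']

theorem lt_apply_of_interesting (hC : IsCF b inc C) {y : E → ℕ} {e : E}
    (h : Interesting b C y e) : y e < C (y + Pi.single e 1) e := by
  obtain ⟨z, hz, hlt, heq, hCz⟩ := h
  have hle : y + Pi.single e 1 ≤ z := by
    intro e'
    rcases eq_or_ne e' e with rfl | he'
    · simpa using hlt
    · simp [he', heq e' he']
  simpa using (le_inf (by simpa using hCz) le_rfl).trans (hC.a2 z _ hz hle e)

theorem apply_add_indicator_eq_self (hC : IsCF b inc C) {x : E → ℕ} {D : Set E}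
    (hv : inBox b (x + D.indicator 1)) (hCx : C x = x)
    (hDint : ∀ e ∈ D, ¬ Interesting b C x e) : C (x + D.indicator 1) = x := by
  classical
  have hxv : x ≤ x + D.indicator 1 := le_add_of_nonneg_right (fun _ => Nat.zero_le _)
  have hCv : C (x + D.indicator 1) ≤ x := by
    intro e
    by_cases he : e ∈ D
    · by_contra! hgt
      refine hDint e he (hC.interesting_of_lt hv (fun e' => ?_) hgt)
      rcases eq_or_ne e' e with rfl | he'
      · simp [he]
      · simp [he']
    · simpa [he] using hC.le _ hv e
  simpa [hCx] using (hC.a1 _ x hv hxv hCv).symm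

theorem exists_apply_add_indicator_eq_add_single (hC : IsCF b inc C) {p : E → ℕ} {c a' : E}
    {D : Set E} (hv : inBox b (p + Pi.single c 1 + D.indicator 1))
    (hCv : C (p + Pi.single c 1 + D.indicator 1) = p + Pi.single c 1) (hc : inc c)
    (hDinc : ∀ e ∈ D, inc e) (ha' : a' ∈ D)
    (hCa' : C (p + Pi.single a' 1) = p + Pi.single a' 1) :
    ∃ a ∈ D, C (p + D.indicator 1) = p + Pi.single a 1 := by
  classical
  set u := p + D.indicator 1
  have huv : u ≤ p + Pi.single c 1 + D.indicator 1 := by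
    intro e
    simp only [u, Pi.add_apply]
    omega
  have hu : inBox b u := fun e => (huv e).trans (hv e)
  have hlow : p ≤ C u := fun e =>
    (le_inf (by simp [hCv]) (by simp [u])).trans (hC.a2 _ u hv huv e)
  have hout : ∀ e ∉ D, C u e ≤ p e := fun e he => by simpa [u, he] using hC.le u hu e
  have hsum_le : ∑ e ∈ Finset.univ.filter inc, C u e ≤ ∑ e ∈ Finset.univ.filter inc, p e + 1 := by
    have := hC.a3 _ u hv huv
    rwa [hCv, sum_filter_add_single hc] at this
  have hsum_ge : ∑ e ∈ Finset.univ.filter inc, p e + 1 ≤ ∑ e ∈ Finset.univ.filter inc, C u e := by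
    have := hC.a3 u _ hu (add_le_add_right (single_le_indicator ha') p)
    rwa [hCa', sum_filter_add_single (hDinc a' ha')] at this
  obtain ⟨a, ha, hCua, hrest⟩ :=
    exists_eq_add_one_of_sum_eq_sum_add_one (fun e _ => hlow e) (le_antisymm hsum_le hsum_ge)
  have haD : a ∈ D := by
    by_contra h
    have := hout a h
    omega
  refine ⟨a, haD, funext fun e => ?_⟩
  rcases eq_or_ne e a with rfl | hea
  · simpa using hCua
  · simp only [Pi.add_apply, Pi.single_eq_of_ne hea, add_zero]
    by_cases he : inc e
    · exact hrest e (by simpa using he) hea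
    · exact le_antisymm (hout e fun h => he (hDinc e h)) (hlow e)

theorem existsUnique_of_apply_add_indicator_eq_add_single (hC : IsCF b inc C) {p : E → ℕ}
    {a : E} {D : Set E} (hu : inBox b (p + D.indicator 1)) (hDinc : ∀ e ∈ D, inc e)
    (ha : a ∈ D) (hCu : C (p + D.indicator 1) = p + Pi.single a 1) :
    ∃! a', a' ∈ D ∧ C (p + Pi.single a' 1) = p + Pi.single a' 1 ∧
      ∀ d ∈ D, d ≠ a' → ¬ Interesting b C (p + Pi.single a' 1) d := by
  have hle : ∀ a' ∈ D, ∀ d ∈ D, a' ≠ d → p + Pi.single a' 1 + Pi.single d 1 ≤ p + D.indicator 1 :=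
    fun a' ha' d hd had => by
      rw [add_assoc]
      exact add_le_add_right (single_add_single_le_indicator ha' hd had) p
  refine ⟨a, ⟨ha, ?_, fun d hd hda hint => ?_⟩, ?_⟩
  · rw [hC.a1 _ _ hu (add_le_add_right (single_le_indicator ha) p) hCu.le, hCu]
  · have hzu := hle a ha d hd hda.symm
    have hzC : p + Pi.single a 1 + Pi.single d 1 ≤ C (p + Pi.single a 1 + Pi.single d 1) := by
      intro e
      rcases eq_or_ne e d with rfl | hed
      · simpa using hC.lt_apply_of_interesting hint
      · exact (le_inf (by simp [hCu, hed]) le_rfl).trans (hC.a2 _ _ hu hzu e)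
    have hsum := (Finset.sum_le_sum fun e _ => hzC e).trans (hC.a3 _ _ hu hzu)
    rw [hCu, sum_filter_add_single (hDinc d hd), sum_filter_add_single (hDinc a ha)] at hsum
    omega
  · rintro a' ⟨ha', -, hess⟩
    by_contra hne
    refine hess a ha (Ne.symm hne) (hC.interesting_of_lt hu (hle a' ha' a ha hne) ?_)
    simp [hCu, Ne.symm hne]

theorem existsUnique_exchange (hC : IsCF b inc C) {p : E → ℕ} {c a' : E}
    {D : Set E} (hv : inBox b (p + Pi.single c 1 + D.indicator 1))
    (hCv : C (p + Pi.single c 1 + D.indicator 1) = p + Pi.single c 1) (hc : inc c)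
    (hDinc : ∀ e ∈ D, inc e) (ha' : a' ∈ D)
    (hCa' : C (p + Pi.single a' 1) = p + Pi.single a' 1) :
    ∃! a, a ∈ D ∧ C (p + Pi.single a 1) = p + Pi.single a 1 ∧
      ∀ d ∈ D, d ≠ a → ¬ Interesting b C (p + Pi.single a 1) d := by
  obtain ⟨a, ha, hCu⟩ := hC.exists_apply_add_indicator_eq_add_single hv hCv hc hDinc ha' hCa'
  have hu : inBox b (p + D.indicator 1) := fun e => le_trans (by simp) (hv e)
  exact hC.existsUnique_of_apply_add_indicator_eq_add_single hu hDinc ha hCu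

end IsCF

/-- Property (3.3): for a stable `x`, `w ∈ W` and `c ∈ E_w ∩ U_F^-(x)`, if some legal
`w`-pair `(c, a')` exists, then there is a unique `a` such that `(c, a)` is an
essential `w`-pair under `x`. -/
theorem statement5 (M : Model W F E) (hM : M.Valid)
    (x : E → ℕ) (hx : M.Stable x) (w : W) (c : E)
    (hcw : M.incW w c) (hcU : M.UFneg x c)
    (hex : ∃ a', M.LegalWPair x w c a') :
    ∃! a : E, M.EssWPair x w c a := by
  obtain ⟨p, rfl⟩ : ∃ p, x = p + Pi.single c 1 := ⟨x - Pi.single c 1, by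
    funext e
    rcases eq_or_ne e c with rfl | hec
    · simpa using (Nat.sub_add_cancel hcU.1).symm
    · simp [hec]⟩
  have hy : ∀ a, p + Pi.single c 1 + Pi.single a 1 - Pi.single c 1 = p + Pi.single a 1 :=
    fun a => by rw [add_right_comm, add_tsub_cancel_right]
  obtain ⟨⟨hxb, hCx, -⟩, hnb⟩ := hx
  have hC := hM.cfW w
  set D : Set E := {e | M.incW w e ∧ M.UFpos (p + Pi.single c 1) e}
  have hDb : ∀ e ∈ D, (p + Pi.single c 1 : E → ℕ) e < M.b e :=
    fun e ⟨_, _, hz, hlt, _⟩ => hlt.trans_le (hz e)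
  have hDint : ∀ e ∈ D, ¬ Interesting M.b (M.Cw w) (p + Pi.single c 1) e := by
    rintro e ⟨rfl, he⟩ hint
    exact hnb e ⟨hint, he⟩
  have hv := inBox_add_indicator hxb hDb
  obtain ⟨a', -, ha'w, -, -, ha'U, hCa'⟩ := hex
  refine (existsUnique_congr fun a => ?_).2 (hC.existsUnique_exchange hv
    (hC.apply_add_indicator_eq_self hv (hCx w) hDint) hcw (fun e he => he.1) ⟨ha'w, ha'U⟩
    (by rwa [hy] at hCa'))
  simp only [Model.EssWPair, Model.LegalWPair, Model.IntW, hy]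
  constructor
  · rintro ⟨⟨-, haw, -, -, haU, hCa⟩, hess⟩
    exact ⟨⟨haw, haU⟩, hCa, fun d hd => hess d hd.1 hd.2⟩
  · rintro ⟨⟨haw, haU⟩, hCa, hess⟩
    exact ⟨⟨hcw, haw, fun h => hcU.2 (h ▸ haU), hcU, haU, hCa⟩, fun d hdw hdU => hess d ⟨hdw, hdU⟩⟩

end SGMMStmt
end

section
/- Let x be a stable g-matching and R a rotation applicable to x. Then x' := x + χ^R is a stable g-matching and x ≺_F x'. -/
namespace SGMMStmt

variable {W F E : Type*} [Fintype E] [DecidableEq E] [DecidableEq W] [DecidableEq F]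

section Core

open Finset

variable {E : Type*} [Fintype E] [DecidableEq E]

/-- `e` is not wanted beyond `β e` at base `β`. -/
def NI (b : E → ℕ) (C : (E → ℕ) → (E → ℕ)) (β : E → ℕ) (e : E) : Prop :=
  ∀ z', inBox b z' → (∀ e', e' ≠ e → z' e' = β e') → C z' e ≤ β e

variable {b : E → ℕ} {inc : E → Prop} [DecidablePred inc] {C : (E → ℕ) → (E → ℕ)}

lemma NI.not_interesting {β : E → ℕ} {e : E} (h : NI b C β e) :
    ¬ Interesting b C β e := by
  rintro ⟨z', hbox, hlt, hagree, hCgt⟩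
  exact absurd (h z' hbox hagree) (by omega)

lemma ni_of_not_interesting (hC : IsCF b inc C) {β : E → ℕ} {e : E}
    (h : ¬ Interesting b C β e) : NI b C β e := by
  intro z' hbox hagree
  by_contra hgt
  push_neg at hgt
  exact h ⟨z', hbox, lt_of_lt_of_le hgt (hC.le z' hbox e), hagree, hgt⟩

lemma sandwich (hC : IsCF b inc C) {x z t : E → ℕ} (hzb : inBox b z) (hxz : x ≤ z)
    (hxacc : C x = x) (hub : ∀ e, inc e → C z e ≤ t e)
    (hsum : ∑ e ∈ Finset.univ.filter inc, t e = ∑ e ∈ Finset.univ.filter inc, x e) :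
    ∀ e, inc e → C z e = t e := by
  have h3 := hC.a3 z x hzb hxz
  rw [hxacc] at h3
  have hle : ∀ e ∈ Finset.univ.filter inc, C z e ≤ t e := by
    intro e he; exact hub e (Finset.mem_filter.1 he).2
  have hsum2 : ∑ e ∈ Finset.univ.filter inc, C z e = ∑ e ∈ Finset.univ.filter inc, t e :=
    le_antisymm (Finset.sum_le_sum hle) (hsum ▸ h3)
  intro e he
  exact (Finset.sum_eq_sum_iff_of_le hle).1 hsum2 e (Finset.mem_filter.2 ⟨Finset.mem_univ e, he⟩)

lemma reject (hC : IsCF b inc C) {β z : E → ℕ} (hβb : inBox b β) (hzb : inBox b z)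
    (hβz : β ≤ z) (hacc : C β = β) (hni : ∀ e, β e < z e → NI b C β e) :
    ∀ e, inc e → C z e = β e := by
  refine sandwich hC hzb hβz hacc ?_ rfl
  intro e _
  rcases lt_or_ge (β e) (z e) with h | h
  · set z1 := Function.update β e (z e) with hz1
    have hz1b : inBox b z1 := by
      intro e'
      by_cases h' : e' = e
      · subst h'; simp only [hz1, Function.update_self]; exact hzb e'
      · simp only [hz1, Function.update_of_ne h']; exact hβb e'
    have hz1z : z1 ≤ z := by
      intro e'
      by_cases h' : e' = e
      · subst h'; simp [hz1]
      · simp only [hz1, Function.update_of_ne h']; exact hβz e'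
    have h2 := hC.a2 z z1 hzb hz1z e
    have hmin : (C z ⊓ z1) e = min (C z e) (z1 e) := rfl
    have hCz1 : C z1 e ≤ β e :=
      hni e h z1 hz1b (fun e' h' => Function.update_of_ne h' _ _)
    have hCle : C z e ≤ z e := hC.le z hzb e
    have : min (C z e) (z1 e) ≤ β e := le_trans (hmin ▸ h2) hCz1
    have hz1e : z1 e = z e := by simp [hz1]
    omega
  · exact le_trans (hC.le z hzb e) h

lemma sum_ite_exists {ι : Type*} [Fintype ι] [DecidableEq ι] (A : ι → E)
    (hinj : Function.Injective A) (hm : ∀ i, inc (A i)) :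
    ∑ e ∈ Finset.univ.filter inc, (if ∃ i, A i = e then (1:ℤ) else 0) = Fintype.card ι := by
  classical
  rw [Finset.sum_subset (Finset.filter_subset inc Finset.univ)
    (by
      intro e _ he
      rw [if_neg]
      rintro ⟨i, rfl⟩
      exact he (Finset.mem_filter.2 ⟨Finset.mem_univ _, hm i⟩))]
  rw [Finset.sum_boole]
  have : Finset.univ.filter (fun e => ∃ i, A i = e) = Finset.univ.image A := by
    ext e
    simp [Finset.mem_image, eq_comm]
  rw [this, Finset.card_image_of_injective _ hinj, Finset.card_univ]

end Core

section Pairs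

open Finset

set_option linter.unusedSectionVars false

variable {E : Type*} [Fintype E] [DecidableEq E]

/-- single swap bundle `x + 1^a - 1^c`. -/
def Yone (x : E → ℕ) (a c : E) : E → ℕ :=
  fun e => if e = a then x e + 1 else if e = c then x e - 1 else x e

open Classical in
/-- full shift bundle `x + Σ 1^{A i} - Σ 1^{C i}`. -/
noncomputable def Ys {ι : Type*} (x : E → ℕ) (A Cc : ι → E) : E → ℕ :=
  fun e => if ∃ i, A i = e then x e + 1 else if ∃ i, Cc i = e then x e - 1 else x e

variable {ι : Type*} [Fintype ι] {x : E → ℕ} {A Cc : ι → E}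

lemma Ys_A (hAC : ∀ i j, A i ≠ Cc j) (i : ι) : Ys x A Cc (A i) = x (A i) + 1 := by
  rw [Ys, if_pos ⟨i, rfl⟩]

lemma Ys_C (hAC : ∀ i j, A i ≠ Cc j) (i : ι) : Ys x A Cc (Cc i) = x (Cc i) - 1 := by
  rw [Ys, if_neg, if_pos ⟨i, rfl⟩]
  rintro ⟨j, hj⟩; exact hAC j i hj

lemma Ys_O {e : E} (ha : ∀ i, A i ≠ e) (hc : ∀ i, Cc i ≠ e) : Ys x A Cc e = x e := by
  rw [Ys, if_neg (by rintro ⟨j, hj⟩; exact ha j hj), if_neg (by rintro ⟨j, hj⟩; exact hc j hj)]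

lemma Ys_ge {e : E} (hc : ∀ i, Cc i ≠ e) : x e ≤ Ys x A Cc e := by
  rw [Ys]
  split
  · omega
  · rw [if_neg (by rintro ⟨j, hj⟩; exact hc j hj)]

variable {inc : E → Prop} [DecidablePred inc]

lemma sum_Ys [DecidableEq ι] (hAinj : Function.Injective A) (hCinj : Function.Injective Cc)
    (hAC : ∀ i j, A i ≠ Cc j) (hcpos : ∀ i, 0 < x (Cc i))
    (hainc : ∀ i, inc (A i)) (hcinc : ∀ i, inc (Cc i)) :
    ∑ e ∈ Finset.univ.filter inc, Ys x A Cc e = ∑ e ∈ Finset.univ.filter inc, x e := by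
  classical
  have key : ∑ e ∈ Finset.univ.filter inc, (Ys x A Cc e : ℤ)
      = ∑ e ∈ Finset.univ.filter inc, (x e : ℤ) := by
    have hpt : ∀ e, (Ys x A Cc e : ℤ) = (x e : ℤ)
        + (if ∃ i, A i = e then (1:ℤ) else 0) - (if ∃ i, Cc i = e then (1:ℤ) else 0) := by
      intro e
      rw [Ys]
      by_cases h1 : ∃ i, A i = e
      · rw [if_pos h1, if_pos h1, if_neg]
        · push_cast; ring
        · rintro ⟨j, hj⟩; obtain ⟨i, hi⟩ := h1; exact hAC i j (hi.trans hj.symm)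
      · rw [if_neg h1, if_neg h1]
        by_cases h2 : ∃ i, Cc i = e
        · rw [if_pos h2, if_pos h2]
          obtain ⟨i, rfl⟩ := h2
          have := hcpos i
          push_cast [Nat.cast_sub (by omega : 1 ≤ x (Cc i))]
          ring
        · rw [if_neg h2, if_neg h2]; ring
    calc ∑ e ∈ Finset.univ.filter inc, (Ys x A Cc e : ℤ)
        = ∑ e ∈ Finset.univ.filter inc, ((x e : ℤ)
            + (if ∃ i, A i = e then (1:ℤ) else 0) - (if ∃ i, Cc i = e then (1:ℤ) else 0)) := by
          exact Finset.sum_congr rfl (fun e _ => hpt e)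
      _ = ∑ e ∈ Finset.univ.filter inc, (x e : ℤ) := by
          rw [Finset.sum_sub_distrib, Finset.sum_add_distrib,
            sum_ite_exists A hAinj hainc, sum_ite_exists Cc hCinj hcinc]
          ring
  exact_mod_cast key

end Pairs

section Worker

open Finset

set_option linter.unusedSectionVars false
set_option maxHeartbeats 1000000

variable {E : Type*} [Fintype E] [DecidableEq E]
variable {b : E → ℕ} {inc : E → Prop} [DecidablePred inc] {C : (E → ℕ) → (E → ℕ)}

lemma worker_main {ι : Type*} [Fintype ι] [DecidableEq ι]
    (hC : IsCF b inc C) {x : E → ℕ} (hxb : inBox b x) (hxacc : C x = x)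
    {A Cc : ι → E} (hAinj : Function.Injective A) (hCinj : Function.Injective Cc)
    (hAC : ∀ i j, A i ≠ Cc j)
    {U : E → Prop} (hUA : ∀ i, U (A i)) (hUinc : ∀ e, U e → inc e)
    (hUb : ∀ e, U e → x e < b e) (hUC : ∀ i, ¬ U (Cc i))
    (hUni : ∀ e, U e → NI b C x e)
    (hcpos : ∀ i, 0 < x (Cc i)) (hcinc : ∀ i, inc (Cc i))
    (hleg : ∀ i, C (Yone x (A i) (Cc i)) = Yone x (A i) (Cc i))
    (hess : ∀ i e, U e → e ≠ A i → NI b C (Yone x (A i) (Cc i)) e) :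
    ∀ (D : E → ℕ), (∀ e, 0 < D e → U e) → inBox b (fun e => Ys x A Cc e + D e) →
      ∀ e, inc e → C (fun e => Ys x A Cc e + D e) e = Ys x A Cc e := by
  classical
  have hainc : ∀ i, inc (A i) := fun i => hUinc _ (hUA i)
  have hY1A : ∀ s, Yone x (A s) (Cc s) (A s) = x (A s) + 1 := by
    intro s; rw [Yone, if_pos rfl]
  have hY1C : ∀ s, Yone x (A s) (Cc s) (Cc s) = x (Cc s) - 1 := by
    intro s; rw [Yone, if_neg (fun h => hAC s s h.symm), if_pos rfl]
  have hY1O : ∀ s e, e ≠ A s → e ≠ Cc s → Yone x (A s) (Cc s) e = x e := by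
    intro s e h1 h2; rw [Yone, if_neg h1, if_neg h2]
  suffices H : ∀ n (D : E → ℕ), (∀ e, 0 < D e → U e) →
      inBox b (fun e => Ys x A Cc e + D e) →
      (∑ e ∈ Finset.univ.filter inc, D e = n) →
      ∀ e, inc e → C (fun e => Ys x A Cc e + D e) e = Ys x A Cc e by
    intro D h1 h2; exact H _ D h1 h2 rfl
  intro n
  induction n using Nat.strong_induction_on with
  | _ n IH =>
  intro D hD hWb hn
  set Wf : E → ℕ := fun e => Ys x A Cc e + D e with hWf
  have hDC : ∀ i, D (Cc i) = 0 := by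
    intro i; by_contra h
    exact hUC i (hD _ (by omega))
  have hWfC : ∀ i, Wf (Cc i) = x (Cc i) - 1 := by
    intro i; simp only [hWf]; rw [Ys_C hAC, hDC]; omega
  have hWfA : ∀ s, D (A s) = 0 → Wf (A s) = x (A s) + 1 := by
    intro s h; simp only [hWf]; rw [Ys_A hAC, h]
  have hWfge : ∀ e, (∀ i, Cc i ≠ e) → x e ≤ Wf e := by
    intro e h; simp only [hWf]
    have := Ys_ge (x := x) (A := A) h
    omega
  -- the base run
  set u : E → ℕ := fun e => if ∃ i, Cc i = e then x e else Wf e with hu_def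
  have hub : inBox b u := by
    intro e; simp only [hu_def]; split
    · exact hxb e
    · exact hWb e
  have hxu : x ≤ u := by
    intro e; simp only [hu_def]; split
    · exact le_refl _
    · next h => exact hWfge e (fun i hi => h ⟨i, hi⟩)
  have hux : ∀ e, x e < u e → NI b C x e := by
    intro e h
    have hcc : ¬ ∃ i, Cc i = e := by
      intro hex; simp only [hu_def, if_pos hex] at h; omega
    simp only [hu_def, if_neg hcc] at h
    by_cases hA : ∃ i, A i = e
    · obtain ⟨i, rfl⟩ := hA; exact hUni _ (hUA i)
    · have : Ys x A Cc e = x e :=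
        Ys_O (fun i hi => hA ⟨i, hi⟩) (fun i hi => hcc ⟨i, hi⟩)
      simp only [hWf] at h
      rw [this] at h
      exact hUni _ (hD e (by omega))
  have hu : ∀ e, inc e → C u e = x e := reject hC hxb hub hxu hxacc hux
  have hWu : Wf ≤ u := by
    intro e; simp only [hu_def]; split
    · next h => obtain ⟨i, rfl⟩ := h; rw [hWfC]; omega
    · exact le_refl _
  have hCWle : ∀ e, C Wf e ≤ Wf e := fun e => hC.le Wf hWb e
  have ha2u : ∀ e, min (C u e) (Wf e) ≤ C Wf e := fun e => hC.a2 u Wf hub hWu e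
  have hlowc : ∀ i, C Wf (Cc i) = Ys x A Cc (Cc i) := by
    intro i
    have h1 := ha2u (Cc i)
    rw [hu _ (hcinc i), hWfC] at h1
    have h2 := hCWle (Cc i)
    rw [hWfC] at h2
    rw [Ys_C hAC]
    omega
  have hlowo : ∀ e, inc e → (∀ i, A i ≠ e) → (∀ i, Cc i ≠ e) → D e = 0 →
      C Wf e = Ys x A Cc e := by
    intro e he h1 h2 h3
    have hYe : Ys x A Cc e = x e := Ys_O h1 h2
    have hWfe : Wf e = x e := by simp only [hWf]; rw [hYe, h3]; omega
    have h4 := ha2u e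
    rw [hu e he, hWfe] at h4
    have h5 := hCWle e
    rw [hWfe] at h5
    omega
  have hlowA : ∀ s, D (A s) = 0 → C Wf (A s) = Ys x A Cc (A s) := by
    intro s hDs
    set zs : E → ℕ := fun e => if ∃ i, Cc i = e ∧ i ≠ s then x e else Wf e with hzs
    have hzsb : inBox b zs := by
      intro e; simp only [hzs]; split
      · exact hxb e
      · exact hWb e
    have hY1b : inBox b (Yone x (A s) (Cc s)) := by
      intro e
      by_cases h1 : e = A s
      · subst h1; rw [hY1A]; exact hUb _ (hUA s)
      · by_cases h2 : e = Cc s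
        · subst h2; rw [hY1C]; have := hxb (Cc s); omega
        · rw [hY1O s e h1 h2]; exact hxb e
    have hY1zs : (Yone x (A s) (Cc s)) ≤ zs := by
      intro e; simp only [hzs]; split
      · next h =>
          obtain ⟨i, rfl, hne⟩ := h
          rw [hY1O s _ (fun h => hAC s i h.symm) (fun h => hne (hCinj h))]
      · next h =>
          by_cases h1 : e = A s
          · subst h1
            rw [hY1A, hWfA s hDs]
          · by_cases h2 : e = Cc s
            · subst h2; rw [hY1C, hWfC]
            · rw [hY1O s e h1 h2]
              refine hWfge e (fun i hi => ?_)
              by_cases his : i = s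
              · subst his; exact h2 hi.symm
              · exact h ⟨i, hi, his⟩
    have hraise : ∀ e, (Yone x (A s) (Cc s)) e < zs e → NI b C (Yone x (A s) (Cc s)) e := by
      intro e hlt
      have hnot : ¬ ∃ i, Cc i = e ∧ i ≠ s := by
        intro h
        obtain ⟨i, rfl, hne⟩ := h
        rw [hY1O s _ (fun h => hAC s i h.symm) (fun h => hne (hCinj h))] at hlt
        have hzse : zs (Cc i) = x (Cc i) := by
          simp only [hzs]
          exact if_pos ⟨i, rfl, hne⟩
        omega
      simp only [hzs, if_neg hnot] at hlt
      have he1 : e ≠ A s := by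
        intro h; subst h; rw [hY1A, hWfA s hDs] at hlt; omega
      have he2 : e ≠ Cc s := by
        intro h; subst h; rw [hY1C, hWfC] at hlt; omega
      rw [hY1O s e he1 he2] at hlt
      have hcc : ∀ i, Cc i ≠ e := by
        intro i hi
        by_cases his : i = s
        · subst his; exact he2 hi.symm
        · exact hnot ⟨i, hi, his⟩
      have hUe : U e := by
        by_cases hA : ∃ i, A i = e
        · obtain ⟨i, rfl⟩ := hA; exact hUA i
        · have : Ys x A Cc e = x e := Ys_O (fun i hi => hA ⟨i, hi⟩) hcc
          simp only [hWf] at hlt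
          rw [this] at hlt
          exact hD e (by omega)
      exact hess s e hUe he1
    have hrej : ∀ e, inc e → C zs e = (Yone x (A s) (Cc s)) e :=
      reject hC hY1b hzsb hY1zs (hleg s) hraise
    have hWzs : Wf ≤ zs := by
      intro e; simp only [hzs]; split
      · next h => obtain ⟨i, rfl, _⟩ := h; rw [hWfC]; omega
      · exact le_refl _
    have ha2z := hC.a2 zs Wf hzsb hWzs (A s)
    have hmin : min (C zs (A s)) (Wf (A s)) ≤ C Wf (A s) := ha2z
    rw [hrej _ (hainc s), hY1A, hWfA s hDs] at hmin
    have h2 := hCWle (A s)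
    rw [hWfA s hDs] at h2
    rw [Ys_A hAC]
    omega
  by_cases hD0 : ∀ e, D e = 0
  · intro e hince
    by_cases h1 : ∃ i, Cc i = e
    · obtain ⟨i, rfl⟩ := h1; exact hlowc i
    · by_cases h2 : ∃ i, A i = e
      · obtain ⟨s, rfl⟩ := h2; exact hlowA s (hD0 _)
      · exact hlowo e hince (fun i hi => h2 ⟨i, hi⟩) (fun i hi => h1 ⟨i, hi⟩) (hD0 e)
  · push_neg at hD0
    obtain ⟨e0, he0⟩ := hD0
    have hU0 : U e0 := hD e0 (by omega)
    have hinc0 : inc e0 := hUinc _ hU0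
    have hup : ∑ e ∈ Finset.univ.filter inc, C Wf e ≤ ∑ e ∈ Finset.univ.filter inc, x e := by
      have h3 := hC.a3 u Wf hub hWu
      calc ∑ e ∈ Finset.univ.filter inc, C Wf e
          ≤ ∑ e ∈ Finset.univ.filter inc, C u e := h3
        _ = ∑ e ∈ Finset.univ.filter inc, x e :=
            Finset.sum_congr rfl (fun e he => hu e (Finset.mem_filter.1 he).2)
    have hYsum : ∑ e ∈ Finset.univ.filter inc, Ys x A Cc e
        = ∑ e ∈ Finset.univ.filter inc, x e :=
      sum_Ys hAinj hCinj hAC hcpos hainc hcinc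
    have hex : ∃ e, inc e ∧ C Wf e < Wf e := by
      by_contra h
      push_neg at h
      have hsum1 : ∑ e ∈ Finset.univ.filter inc, Wf e
          ≤ ∑ e ∈ Finset.univ.filter inc, C Wf e :=
        Finset.sum_le_sum (fun e he => h e (Finset.mem_filter.1 he).2)
      have hWsum : ∑ e ∈ Finset.univ.filter inc, Wf e
          = (∑ e ∈ Finset.univ.filter inc, Ys x A Cc e)
            + ∑ e ∈ Finset.univ.filter inc, D e := by
        simp only [hWf]; rw [Finset.sum_add_distrib]
      have hD0sum : D e0 ≤ ∑ e ∈ Finset.univ.filter inc, D e :=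
        Finset.single_le_sum (fun e _ => Nat.zero_le _)
          (Finset.mem_filter.2 ⟨Finset.mem_univ _, hinc0⟩)
      omega
    obtain ⟨e1, hinc1, hlt1⟩ := hex
    have hD1 : 0 < D e1 := by
      by_contra h
      push_neg at h
      have hD1z : D e1 = 0 := by omega
      have : C Wf e1 = Ys x A Cc e1 := by
        by_cases h1 : ∃ i, Cc i = e1
        · obtain ⟨i, rfl⟩ := h1; exact hlowc i
        · by_cases h2 : ∃ i, A i = e1
          · obtain ⟨s, rfl⟩ := h2; exact hlowA s hD1z
          · exact hlowo e1 hinc1 (fun i hi => h2 ⟨i, hi⟩) (fun i hi => h1 ⟨i, hi⟩) hD1z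
      have : Wf e1 = Ys x A Cc e1 + D e1 := rfl
      omega
    set D' := Function.update D e1 (D e1 - 1) with hD'
    set Wf' : E → ℕ := fun e => Ys x A Cc e + D' e with hWf'
    have hWfeq : Wf' = Function.update Wf e1 (Wf e1 - 1) := by
      funext e
      by_cases h : e = e1
      · subst h
        simp only [hWf', hD', Function.update_self]
        have : Wf e = Ys x A Cc e + D e := rfl
        omega
      · simp only [hWf', hD', Function.update_of_ne h]; rfl
    have hWle : Wf' ≤ Wf := by
      rw [hWfeq]; intro e
      by_cases h : e = e1
      · subst h; simp [Function.update_self]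
      · simp [Function.update_of_ne h]
    have hCleW : C Wf ≤ Wf' := by
      rw [hWfeq]; intro e
      by_cases h : e = e1
      · subst h; simp only [Function.update_self]; omega
      · simp only [Function.update_of_ne h]; exact hCWle e
    have ha1 := hC.a1 Wf Wf' hWb hWle hCleW
    have hD'U : ∀ e, 0 < D' e → U e := by
      intro e he
      apply hD
      by_cases h : e = e1
      · subst h; omega
      · simp only [hD', Function.update_of_ne h] at he; exact he
    have hWb' : inBox b Wf' := fun e => le_trans (hWle e) (hWb e)
    have hsum' : ∑ e ∈ Finset.univ.filter inc, D' e < n := by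
      rw [← hn]
      apply Finset.sum_lt_sum
      · intro e _
        by_cases h : e = e1
        · subst h; simp only [hD', Function.update_self]; omega
        · simp only [hD', Function.update_of_ne h]; exact le_refl _
      · refine ⟨e1, Finset.mem_filter.2 ⟨Finset.mem_univ _, hinc1⟩, ?_⟩
        simp only [hD', Function.update_self]; omega
    intro e hince
    have hfin := IH _ hsum' D' hD'U hWb' rfl e hince
    calc C Wf e = C Wf' e := (congrFun ha1 e).symm
      _ = Ys x A Cc e := hfin

end Worker

section Firm

open Finset

set_option linter.unusedSectionVars false
set_option maxHeartbeats 1000000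

variable {E : Type*} [Fintype E] [DecidableEq E]

/-- `x + 1^a`. -/
def Qone (x : E → ℕ) (a : E) : E → ℕ := fun e => if e = a then x e + 1 else x e

lemma Qone_a (x : E → ℕ) (a : E) : Qone x a a = x a + 1 := by rw [Qone, if_pos rfl]

lemma Qone_o (x : E → ℕ) {a e : E} (h : e ≠ a) : Qone x a e = x e := by rw [Qone, if_neg h]

open Classical in
/-- `x + Σ 1^{A i}`. -/
noncomputable def Zt {ι : Type*} (x : E → ℕ) (A : ι → E) : E → ℕ :=
  fun e => if ∃ i, A i = e then x e + 1 else x e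

variable {ι : Type*} [Fintype ι] {x : E → ℕ} {A Cc : ι → E}

lemma Zt_A (i : ι) : Zt x A (A i) = x (A i) + 1 := by rw [Zt, if_pos ⟨i, rfl⟩]

lemma Zt_O {e : E} (h : ∀ i, A i ≠ e) : Zt x A e = x e := by
  rw [Zt, if_neg (by rintro ⟨i, hi⟩; exact h i hi)]

lemma Zt_ge : x ≤ Zt x A := by
  intro e
  by_cases h : ∃ i, A i = e
  · obtain ⟨i, rfl⟩ := h; rw [Zt_A]; exact Nat.le_succ _
  · rw [Zt_O (fun i hi => h ⟨i, hi⟩)]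

lemma Ys_le_Zt (hAC : ∀ i j, A i ≠ Cc j) : Ys x A Cc ≤ Zt x A := by
  intro e
  by_cases h : ∃ i, A i = e
  · obtain ⟨i, rfl⟩ := h; rw [Ys_A hAC, Zt_A]
  · rw [Zt_O (fun i hi => h ⟨i, hi⟩)]
    by_cases h2 : ∃ i, Cc i = e
    · obtain ⟨i, rfl⟩ := h2; rw [Ys_C hAC]; exact Nat.sub_le _ _
    · rw [Ys_O (fun i hi => h ⟨i, hi⟩) (fun i hi => h2 ⟨i, hi⟩)]

variable {b : E → ℕ} {inc : E → Prop} [DecidablePred inc] {C : (E → ℕ) → (E → ℕ)}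

lemma Zt_box (hxb : inBox b x) (hab : ∀ i, x (A i) < b (A i)) : inBox b (Zt x A) := by
  intro e
  by_cases h : ∃ i, A i = e
  · obtain ⟨i, rfl⟩ := h; rw [Zt_A]; exact hab i
  · rw [Zt_O (fun i hi => h ⟨i, hi⟩)]; exact hxb e

lemma firm_zT [DecidableEq ι]
    (hC : IsCF b inc C) (hxb : inBox b x) (hxacc : C x = x)
    (hAinj : Function.Injective A) (hCinj : Function.Injective Cc)
    (hAC : ∀ i j, A i ≠ Cc j)
    (hainc : ∀ i, inc (A i)) (hcinc : ∀ i, inc (Cc i))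
    (hab : ∀ i, x (A i) < b (A i)) (hcpos : ∀ i, 0 < x (Cc i))
    (hleg : ∀ i, C (Qone x (A i)) = Yone x (A i) (Cc i)) :
    C (Zt x A) = Ys x A Cc := by
  classical
  have hZb : inBox b (Zt x A) := Zt_box hxb hab
  have hQle : ∀ i, Qone x (A i) ≤ Zt x A := by
    intro i e
    rw [Qone]
    split
    · next h => subst h; rw [Zt_A]
    · exact Zt_ge e
  have hbc : ∀ i, C (Zt x A) (Cc i) ≤ x (Cc i) - 1 := by
    intro i
    have h2 := hC.a2 (Zt x A) (Qone x (A i)) hZb (hQle i) (Cc i)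
    have hQc : Qone x (A i) (Cc i) = x (Cc i) := by
      rw [Qone, if_neg (fun h => hAC i i h.symm)]
    have hYc : Yone x (A i) (Cc i) (Cc i) = x (Cc i) - 1 := by
      rw [Yone, if_neg (fun h => hAC i i h.symm), if_pos rfl]
    have hmin : min (C (Zt x A) (Cc i)) (Qone x (A i) (Cc i))
        ≤ C (Qone x (A i)) (Cc i) := h2
    rw [hleg i, hQc, hYc] at hmin
    have := hcpos i
    omega
  have hub : ∀ e, inc e → C (Zt x A) e ≤ Ys x A Cc e := by
    intro e _
    by_cases h1 : ∃ i, Cc i = e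
    · obtain ⟨i, rfl⟩ := h1; rw [Ys_C hAC]; exact hbc i
    · by_cases h2 : ∃ i, A i = e
      · obtain ⟨i, rfl⟩ := h2
        rw [Ys_A hAC, ← Zt_A (x := x) i]
        exact hC.le _ hZb _
      · rw [Ys_O (fun i hi => h2 ⟨i, hi⟩) (fun i hi => h1 ⟨i, hi⟩),
          ← Zt_O (x := x) (fun i hi => h2 ⟨i, hi⟩)]
        exact hC.le _ hZb _
  have hinc := sandwich hC hZb Zt_ge hxacc hub
    (sum_Ys hAinj hCinj hAC hcpos hainc hcinc)
  funext e
  by_cases h : inc e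
  · exact hinc e h
  · rw [hC.offId _ _ h, Zt_O (fun i hi => h (by rw [← hi]; exact hainc i)),
      Ys_O (fun i hi => h (by rw [← hi]; exact hainc i)) (fun i hi => h (by rw [← hi]; exact hcinc i))]

lemma firm_acc [DecidableEq ι]
    (hC : IsCF b inc C) (hxb : inBox b x) (hxacc : C x = x)
    (hAinj : Function.Injective A) (hCinj : Function.Injective Cc)
    (hAC : ∀ i j, A i ≠ Cc j)
    (hainc : ∀ i, inc (A i)) (hcinc : ∀ i, inc (Cc i))
    (hab : ∀ i, x (A i) < b (A i)) (hcpos : ∀ i, 0 < x (Cc i))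
    (hleg : ∀ i, C (Qone x (A i)) = Yone x (A i) (Cc i)) :
    C (Ys x A Cc) = Ys x A Cc := by
  have hzt := firm_zT hC hxb hxacc hAinj hCinj hAC hainc hcinc hab hcpos hleg
  have := hC.a1 (Zt x A) (Ys x A Cc) (Zt_box hxb hab) (Ys_le_Zt hAC)
    (le_of_eq hzt)
  rw [this, hzt]

lemma firm_NI [DecidableEq ι]
    (hC : IsCF b inc C) (hxb : inBox b x) (hxacc : C x = x)
    (hAinj : Function.Injective A) (hCinj : Function.Injective Cc)
    (hAC : ∀ i j, A i ≠ Cc j)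
    (hainc : ∀ i, inc (A i)) (hcinc : ∀ i, inc (Cc i))
    (hab : ∀ i, x (A i) < b (A i)) (hcpos : ∀ i, 0 < x (Cc i))
    (hleg : ∀ i, C (Qone x (A i)) = Yone x (A i) (Cc i))
    {e : E} (hince : inc e) (hea : ∀ i, A i ≠ e)
    (halt : (∃ i, Cc i = e) ∨ NI b C x e) :
    ∀ v, inBox b v → (∀ e', e' ≠ e → v e' = Ys x A Cc e') → Ys x A Cc e ≤ v e →
      C v = Ys x A Cc := by
  classical
  intro v hvb hvagree hvge
  rcases eq_or_lt_of_le hvge with heq | hlt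
  · have hveq : v = Ys x A Cc := by
      funext e'
      by_cases h : e' = e
      · subst h; exact heq.symm
      · exact hvagree e' h
    rw [hveq]
    exact firm_acc hC hxb hxacc hAinj hCinj hAC hainc hcinc hab hcpos hleg
  · -- v e > Ys e
    have hcne : ∀ i, Cc i ≠ e → True := fun _ _ => trivial
    have hvex : x e ≤ v e := by
      by_cases h1 : ∃ i, Cc i = e
      · obtain ⟨i, rfl⟩ := h1
        rw [Ys_C hAC] at hlt
        have := hcpos i
        omega
      · rw [Ys_O (fun i hi => hea i hi) (fun i hi => h1 ⟨i, hi⟩)] at hlt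
        omega
    set P : E → ℕ := fun e' => if e' = e then v e else Zt x A e' with hP
    have hPe : P e = v e := by simp [hP]
    have hPo : ∀ e', e' ≠ e → P e' = Zt x A e' := by
      intro e' h; simp [hP, h]
    have hPb : inBox b P := by
      intro e'
      by_cases h : e' = e
      · subst h; rw [hPe]; exact hvb e'
      · rw [hPo e' h]; exact Zt_box hxb hab e'
    have hxP : x ≤ P := by
      intro e'
      by_cases h : e' = e
      · subst h; rw [hPe]; exact hvex
      · rw [hPo e' h]; exact Zt_ge e'
    have hbc : ∀ i, C P (Cc i) ≤ x (Cc i) - 1 := by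
      intro i
      have hQle : Qone x (A i) ≤ P := by
        intro e'
        by_cases h : e' = e
        · subst h
          rw [hPe, Qone, if_neg (fun h => hea i h.symm)]
          exact hvex
        · rw [hPo e' h, Qone]
          split
          · next h2 => subst h2; rw [Zt_A]
          · exact Zt_ge e'
      have hQc : Qone x (A i) (Cc i) = x (Cc i) := by
        rw [Qone, if_neg (fun h => hAC i i h.symm)]
      have hYc : Yone x (A i) (Cc i) (Cc i) = x (Cc i) - 1 := by
        rw [Yone, if_neg (fun h => hAC i i h.symm), if_pos rfl]
      have hmin : min (C P (Cc i)) (Qone x (A i) (Cc i))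
          ≤ C (Qone x (A i)) (Cc i) := hC.a2 P (Qone x (A i)) hPb hQle (Cc i)
      rw [hleg i, hQc, hYc] at hmin
      have := hcpos i
      omega
    have hube : C P e ≤ Ys x A Cc e := by
      by_cases h1 : ∃ i, Cc i = e
      · obtain ⟨i, rfl⟩ := h1
        rw [Ys_C hAC]
        exact hbc i
      · have hni : NI b C x e := halt.resolve_left h1
        have hYe : Ys x A Cc e = x e :=
          Ys_O (fun i hi => hea i hi) (fun i hi => h1 ⟨i, hi⟩)
        rw [hYe] at hlt ⊢
        set r : E → ℕ := fun e' => if e' = e then v e else x e' with hr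
        have hrb : inBox b r := by
          intro e'
          by_cases h : e' = e
          · subst h; simp only [hr, if_pos rfl]; exact hvb e'
          · simp only [hr, if_neg h]; exact hxb e'
        have hrP : r ≤ P := by
          intro e'
          by_cases h : e' = e
          · subst h; simp only [hr, if_pos rfl]; rw [hPe]
          · simp only [hr, if_neg h]; rw [hPo e' h]; exact Zt_ge e'
        have hCr : C r e ≤ x e := hni r hrb (by
          intro e' h; simp only [hr, if_neg h])
        have h2 := hC.a2 P r hPb hrP e
        have hre : r e = v e := by simp [hr]
        have hmin : min (C P e) (v e) ≤ x e := by
          rw [← hre]; exact le_trans h2 hCr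
        have hCPle : C P e ≤ P e := hC.le P hPb e
        rw [hPe] at hCPle
        omega
    have hub : ∀ e', inc e' → C P e' ≤ Ys x A Cc e' := by
      intro e' _
      by_cases h : e' = e
      · subst h; exact hube
      · by_cases h1 : ∃ i, Cc i = e'
        · obtain ⟨i, rfl⟩ := h1; rw [Ys_C hAC]; exact hbc i
        · by_cases h2 : ∃ i, A i = e'
          · obtain ⟨i, rfl⟩ := h2
            rw [Ys_A hAC]
            have := hC.le P hPb (A i)
            rw [hPo _ h, Zt_A] at this
            exact this
          · rw [Ys_O (fun i hi => h2 ⟨i, hi⟩) (fun i hi => h1 ⟨i, hi⟩)]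
            have := hC.le P hPb e'
            rw [hPo _ h, Zt_O (fun i hi => h2 ⟨i, hi⟩)] at this
            exact this
    have hsand := sandwich hC hPb hxP hxacc hub
      (sum_Ys hAinj hCinj hAC hcpos hainc hcinc)
    have hCP : C P = Ys x A Cc := by
      funext e'
      by_cases h : inc e'
      · exact hsand e' h
      · have hne : e' ≠ e := fun hh => h (hh ▸ hince)
        rw [hC.offId _ _ h, hPo e' hne, Zt_O (fun i hi => h (by rw [← hi]; exact hainc i)),
          Ys_O (fun i hi => h (by rw [← hi]; exact hainc i)) (fun i hi => h (by rw [← hi]; exact hcinc i))]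
    have hvP : v ≤ P := by
      intro e'
      by_cases h : e' = e
      · subst h; rw [hPe]
      · rw [hPo e' h, hvagree e' h]; exact Ys_le_Zt hAC e'
    have hCPv : C P ≤ v := by
      rw [hCP]
      intro e'
      by_cases h : e' = e
      · subst h; exact hvge
      · rw [hvagree e' h]
    have := hC.a1 P v hPb hvP hCPv
    rw [this, hCP]

end Firm

section Assemble

open Finset

set_option linter.unusedSectionVars false
set_option maxHeartbeats 2000000

variable {E : Type*} [Fintype E] [DecidableEq E]

lemma add_single_eq_Qone (x : E → ℕ) (a : E) : x + Pi.single a 1 = Qone x a := by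
  funext e
  rw [Pi.add_apply, Pi.single_apply, Qone]
  split <;> omega

lemma addsub_eq_Yone (x : E → ℕ) {a c : E} (h : a ≠ c) :
    x + Pi.single a 1 - Pi.single c 1 = Yone x a c := by
  funext e
  rw [Pi.sub_apply, Pi.add_apply, Pi.single_apply, Pi.single_apply, Yone]
  by_cases h1 : e = a
  · rw [if_pos h1, if_pos h1, if_neg (h1 ▸ h)]
    omega
  · rw [if_neg h1, if_neg h1]
    by_cases h2 : e = c
    · rw [if_pos h2, if_pos h2]; omega
    · rw [if_neg h2, if_neg h2]; omega

end Assemble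


set_option maxHeartbeats 4000000 in
/-- Proposition 3.4: if `R` is a rotation applicable to a stable g-matching `x`,
then `x' := x + χ^R` is a stable g-matching and `x ≺_F x'`. -/
theorem statement9 (M : Model W F E) (hM : M.Valid)
    (x : E → ℕ) (hx : M.Stable x) (R : Cyc E) (hR : M.IsRotation x R) :
    M.Stable (R.apply x 1) ∧ M.PrecF x (R.apply x 1) := by
  classical
  obtain ⟨⟨hxb, haccW, haccF⟩, hnb⟩ := hx
  obtain ⟨hainj, hcinj, hac, hFp, hWp⟩ := hR
  set x' := R.apply x 1 with hx'
  -- basic mod arithmetic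
  have hnxt_inj : Function.Injective R.nxt := by
    intro i j hij
    have h1 : (i.1 + 1) % R.k = (j.1 + 1) % R.k := congrArg Fin.val hij
    have hi := i.2; have hj := j.2
    have e1 : (i.1 + 1) % R.k = if i.1 + 1 = R.k then 0 else i.1 + 1 := by
      split
      · next h => rw [h, Nat.mod_self]
      · exact Nat.mod_eq_of_lt (by omega)
    have e2 : (j.1 + 1) % R.k = if j.1 + 1 = R.k then 0 else j.1 + 1 := by
      split
      · next h => rw [h, Nat.mod_self]
      · exact Nat.mod_eq_of_lt (by omega)
    apply Fin.ext
    rw [e1, e2] at h1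
    split at h1 <;> split at h1 <;> omega
  have hnxt_surj : ∀ j, ∃ i, R.nxt i = j := by
    intro j
    refine ⟨⟨(j.1 + (R.k - 1)) % R.k, Nat.mod_lt _ R.hk⟩, ?_⟩
    apply Fin.ext
    show ((j.1 + (R.k - 1)) % R.k + 1) % R.k = j.1
    rw [Nat.mod_add_mod]
    have : j.1 + (R.k - 1) + 1 = j.1 + R.k := by have := R.hk; omega
    rw [this, Nat.add_mod_right, Nat.mod_eq_of_lt j.2]
  -- rotation data
  have hef : ∀ i, M.ef (R.a i) = M.ef (R.c i) := fun i => (hFp i).1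
  have hxab : ∀ i, x (R.a i) < M.b (R.a i) := fun i => (hFp i).2.2.2.2.1
  have hacne : ∀ i, R.a i ≠ R.c i := fun i => (hFp i).2.2.2.1
  have hflegeq : ∀ i, M.Cf (M.ef (R.a i)) (Qone x (R.a i)) = Yone x (R.a i) (R.c i) := by
    intro i
    have heq := (hFp i).2.2.2.2.2
    rw [add_single_eq_Qone x (R.a i)] at heq
    funext e
    have h1 := congrFun heq e
    rw [Pi.add_apply, Pi.single_apply] at h1
    simp only [Yone]
    by_cases h2 : e = R.a i
    · subst h2
      rw [if_neg (hacne i), Qone_a] at h1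
      rw [if_pos rfl]
      omega
    · rw [Qone_o x h2] at h1
      rw [if_neg h2]
      by_cases h3 : e = R.c i
      · subst h3
        rw [if_pos rfl] at h1
        rw [if_pos rfl]
        omega
      · rw [if_neg h3] at h1
        rw [if_neg h3]
        omega
  have hew : ∀ i, M.ew (R.c i) = M.ew (R.a (R.nxt i)) := fun i => (hWp i).1
  have hEss : ∀ i, M.EssWPair x (M.ew (R.c i)) (R.c i) (R.a (R.nxt i)) := fun i => (hWp i).2
  have hufneg : ∀ i, M.UFneg x (R.c i) := fun i => (hEss i).1.2.2.2.1
  have hxcpos : ∀ i, 0 < x (R.c i) := fun i => (hufneg i).1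
  have hcnint : ∀ i, ¬ M.IntF (M.ef (R.c i)) x (R.c i) := fun i => (hufneg i).2
  have hufposn : ∀ i, M.UFpos x (R.a (R.nxt i)) := fun i => (hEss i).1.2.2.2.2.1
  have hufpos : ∀ j, M.IntF (M.ef (R.a j)) x (R.a j) := by
    intro j
    obtain ⟨i, rfl⟩ := hnxt_surj j
    exact hufposn i
  have hwlegeq : ∀ i, M.Cw (M.ew (R.c i)) (Yone x (R.a (R.nxt i)) (R.c i))
      = Yone x (R.a (R.nxt i)) (R.c i) := by
    intro i
    have heq := (hEss i).1.2.2.2.2.2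
    rwa [addsub_eq_Yone x (hac (R.nxt i) i)] at heq
  -- values of x'
  have hchi_a : ∀ i, R.chi (R.a i) = 1 := by
    intro i
    rw [Cyc.chi, if_pos ⟨i, rfl⟩, if_neg (by rintro ⟨j, hj⟩; exact hac i j hj.symm)]
    omega
  have hchi_c : ∀ i, R.chi (R.c i) = -1 := by
    intro i
    rw [Cyc.chi, if_neg (by rintro ⟨j, hj⟩; exact hac j i hj), if_pos ⟨i, rfl⟩]
    omega
  have hchi_o : ∀ e, (∀ i, R.a i ≠ e) → (∀ i, R.c i ≠ e) → R.chi e = 0 := by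
    intro e h1 h2
    rw [Cyc.chi, if_neg (by rintro ⟨j, hj⟩; exact h1 j hj),
      if_neg (by rintro ⟨j, hj⟩; exact h2 j hj)]
    omega
  have hxa' : ∀ i, x' (R.a i) = x (R.a i) + 1 := by
    intro i
    show ((x (R.a i) : ℤ) + 1 * R.chi (R.a i)).toNat = x (R.a i) + 1
    rw [hchi_a]; omega
  have hxc' : ∀ i, x' (R.c i) = x (R.c i) - 1 := by
    intro i
    show ((x (R.c i) : ℤ) + 1 * R.chi (R.c i)).toNat = x (R.c i) - 1
    rw [hchi_c]; omega
  have hxo' : ∀ e, (∀ i, R.a i ≠ e) → (∀ i, R.c i ≠ e) → x' e = x e := by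
    intro e h1 h2
    show ((x e : ℤ) + 1 * R.chi e).toNat = x e
    rw [hchi_o e h1 h2]; omega
  have hx'b : inBox M.b x' := by
    intro e
    by_cases h1 : ∃ i, R.a i = e
    · obtain ⟨i, rfl⟩ := h1; rw [hxa']; exact hxab i
    · by_cases h2 : ∃ i, R.c i = e
      · obtain ⟨i, rfl⟩ := h2; rw [hxc']
        exact le_trans (Nat.sub_le _ _) (hxb _)
      · rw [hxo' e (fun i hi => h1 ⟨i, hi⟩) (fun i hi => h2 ⟨i, hi⟩)]
        exact hxb e
  -- worker-side main facts
  have workerMain : ∀ w : W,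
      (∀ e, M.incW w e → M.Cw w x' e = x' e) ∧
      (∀ e, M.incW w e → M.IntF (M.ef e) x e →
        ¬ Interesting M.b (M.Cw w) x' e) := by
    intro w
    set A : {i : Fin R.k // M.ew (R.c i) = w} → E := fun i => R.a (R.nxt i.1) with hA
    set Cc : {i : Fin R.k // M.ew (R.c i) = w} → E := fun i => R.c i.1 with hCc
    set U : E → Prop := fun e => M.IntF (M.ef e) x e ∧ M.ew e = w with hU
    have hAinj : Function.Injective A := by
      intro i j hij
      exact Subtype.ext (hnxt_inj (hainj hij))
    have hCinj : Function.Injective Cc := by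
      intro i j hij
      exact Subtype.ext (hcinj hij)
    have hACd : ∀ i j, A i ≠ Cc j := fun i j => hac _ _
    have hUA : ∀ i, U (A i) := by
      intro i
      refine ⟨hufposn i.1, ?_⟩
      rw [← hew i.1]
      exact i.2
    have hUinc : ∀ e, U e → M.incW w e := fun e hu => hu.2
    have hUb : ∀ e, U e → x e < M.b e := by
      intro e hu
      obtain ⟨z', hz'b, hz'lt, _, _⟩ := hu.1
      exact lt_of_lt_of_le hz'lt (hz'b e)
    have hUC : ∀ i, ¬ U (Cc i) := by
      intro i hu
      exact hcnint i.1 hu.1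
    have hUni : ∀ e, U e → NI M.b (M.Cw w) x e := by
      intro e hu
      apply ni_of_not_interesting (hM.cfW w)
      intro hint
      apply hnb e
      refine ⟨?_, hu.1⟩
      show Interesting M.b (M.Cw (M.ew e)) x e
      rw [hu.2]
      exact hint
    have hcpos : ∀ i, 0 < x (Cc i) := fun i => hxcpos i.1
    have hcincw : ∀ i, M.incW w (Cc i) := fun i => i.2
    have hlegw : ∀ i, M.Cw w (Yone x (A i) (Cc i)) = Yone x (A i) (Cc i) := by
      intro i
      have := hwlegeq i.1
      rwa [i.2] at this
    have hessw : ∀ i e, U e → e ≠ A i → NI M.b (M.Cw w) (Yone x (A i) (Cc i)) e := by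
      intro i e hu hne
      apply ni_of_not_interesting (hM.cfW w)
      intro hint
      have h2 := (hEss i.1).2 e (by rw [i.2]; exact hu.2) hu.1 hne
      apply h2
      show Interesting M.b (M.Cw (M.ew (R.c i.1))) _ e
      rw [i.2, addsub_eq_Yone x (hac (R.nxt i.1) i.1)]
      exact hint
    have hwm := worker_main (hM.cfW w) hxb (haccW w) hAinj hCinj hACd hUA hUinc hUb
      hUC hUni hcpos hcincw hlegw hessw
    -- coincidence of x' with Ys on the star of w
    have hYw : ∀ e, M.incW w e → x' e = Ys x A Cc e := by
      intro e he
      by_cases h1 : ∃ j, R.a j = e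
      · obtain ⟨j, rfl⟩ := h1
        obtain ⟨i0, hi0⟩ := hnxt_surj j
        have hmem : M.ew (R.c i0) = w := by
          rw [hew i0, hi0]
          exact he
        have hval := Ys_A (x := x) hACd ⟨i0, hmem⟩
        have hAe : A ⟨i0, hmem⟩ = R.a j := by rw [hA]; simp only [hi0]
        rw [hAe] at hval
        rw [hval, hxa']
      · by_cases h2 : ∃ j, R.c j = e
        · obtain ⟨j, rfl⟩ := h2
          have hval := Ys_C (x := x) hACd ⟨j, he⟩
          rw [hval, hxc']
        · rw [Ys_O (A := A) (Cc := Cc) (fun i hi => h1 ⟨R.nxt i.1, hi⟩)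
            (fun i hi => h2 ⟨i.1, hi⟩)]
          exact hxo' e (fun j hj => h1 ⟨j, hj⟩) (fun j hj => h2 ⟨j, hj⟩)
    have hYb : ∀ e, Ys x A Cc e ≤ M.b e := by
      intro e
      by_cases h1 : ∃ i, A i = e
      · obtain ⟨i, rfl⟩ := h1
        rw [Ys_A hACd]
        exact hxab (R.nxt i.1)
      · by_cases h2 : ∃ i, Cc i = e
        · obtain ⟨i, rfl⟩ := h2
          rw [Ys_C hACd]
          exact le_trans (Nat.sub_le _ _) (hxb _)
        · rw [Ys_O (fun i hi => h1 ⟨i, hi⟩) (fun i hi => h2 ⟨i, hi⟩)]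
          exact hxb e
    constructor
    · -- acceptability at w
      intro e he
      have h1 := hwm (fun _ => 0) (by intro e h; simp at h)
        (by intro e'; simpa using hYb e') e he
      have h2 := (hM.cfW w).localDep x' (fun e' => Ys x A Cc e' + 0)
        (fun e' he' => by simp only [Nat.add_zero]; rw [hYw e' he']) e he
      rw [h2, h1, ← hYw e he]
    · -- no new interest at w for U-edges
      intro e he hUF hint
      obtain ⟨z', hz'b, hz'lt, hz'ag, hz'C⟩ := hint
      have hUe : U e := ⟨hUF, he⟩
      set D : E → ℕ := fun e' => if e' = e then z' e - Ys x A Cc e else 0 with hD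
      have hxYe : x' e = Ys x A Cc e := hYw e he
      have hDpos : ∀ e', 0 < D e' → U e' := by
        intro e' hpos
        by_cases h : e' = e
        · subst h; exact hUe
        · simp only [hD, if_neg h] at hpos; omega
      have hDbox : inBox M.b (fun e' => Ys x A Cc e' + D e') := by
        intro e'
        by_cases h : e' = e
        · subst h
          simp only [hD, if_pos rfl]
          have := hz'b e'
          omega
        · simp only [hD, if_neg h]
          simpa using hYb e'
      have h1 := hwm D hDpos hDbox e he
      have h2 := (hM.cfW w).localDep z' (fun e' => Ys x A Cc e' + D e')
        (by
          intro e' he'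
          by_cases h : e' = e
          · subst h
            simp only [hD, if_pos rfl]
            omega
          · simp only [hD, if_neg h, Nat.add_zero]
            rw [hz'ag e' h, hYw e' he']) e he
      rw [h2, h1] at hz'C
      omega
  -- firm-side main facts
  have firmMain : ∀ f : F,
      (∀ e, M.incF f e → M.Cf f x' e = x' e) ∧
      (∀ e, M.incF f e → M.Cf f (x ⊔ x') e = x' e) ∧
      (∀ e, M.incF f e → (∀ j, R.a j ≠ e) →
        ((∃ j, R.c j = e) ∨ ¬ Interesting M.b (M.Cf f) x e) →
        ¬ Interesting M.b (M.Cf f) x' e) := by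
    intro f
    set A : {i : Fin R.k // M.ef (R.a i) = f} → E := fun i => R.a i.1 with hA
    set Cc : {i : Fin R.k // M.ef (R.a i) = f} → E := fun i => R.c i.1 with hCc
    have hAinj : Function.Injective A := fun i j hij => Subtype.ext (hainj hij)
    have hCinj : Function.Injective Cc := fun i j hij => Subtype.ext (hcinj hij)
    have hACd : ∀ i j, A i ≠ Cc j := fun i j => hac _ _
    have haincf : ∀ i, M.incF f (A i) := fun i => i.2
    have hcincf : ∀ i, M.incF f (Cc i) := by
      intro i
      show M.ef (R.c i.1) = f
      rw [← hef i.1]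
      exact i.2
    have habf : ∀ i, x (A i) < M.b (A i) := fun i => hxab i.1
    have hcposf : ∀ i, 0 < x (Cc i) := fun i => hxcpos i.1
    have hlegf : ∀ i, M.Cf f (Qone x (A i)) = Yone x (A i) (Cc i) := by
      intro i
      have := hflegeq i.1
      rwa [i.2] at this
    have hzt := firm_zT (hM.cfF f) hxb (haccF f) hAinj hCinj hACd haincf hcincf
      habf hcposf hlegf
    have haccf := firm_acc (hM.cfF f) hxb (haccF f) hAinj hCinj hACd haincf hcincf
      habf hcposf hlegf
    have hYf : ∀ e, M.incF f e → x' e = Ys x A Cc e := by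
      intro e he
      by_cases h1 : ∃ j, R.a j = e
      · obtain ⟨j, rfl⟩ := h1
        have hval := Ys_A (x := x) hACd ⟨j, he⟩
        rw [hval, hxa']
      · by_cases h2 : ∃ j, R.c j = e
        · obtain ⟨j, rfl⟩ := h2
          have hmem : M.ef (R.a j) = f := by rw [hef j]; exact he
          have hval := Ys_C (x := x) hACd ⟨j, hmem⟩
          rw [hval, hxc']
        · rw [Ys_O (A := A) (Cc := Cc) (fun i hi => h1 ⟨i.1, hi⟩)
            (fun i hi => h2 ⟨i.1, hi⟩)]
          exact hxo' e (fun j hj => h1 ⟨j, hj⟩) (fun j hj => h2 ⟨j, hj⟩)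
    refine ⟨?_, ?_, ?_⟩
    · -- acceptability at f
      intro e he
      have h2 := (hM.cfF f).localDep x' (Ys x A Cc)
        (fun e' he' => hYf e' he') e he
      rw [h2, congrFun haccf e, ← hYf e he]
    · -- the sup property
      intro e he
      have hag : ∀ e', M.incF f e' → (x ⊔ x') e' = Zt x A e' := by
        intro e' he'
        rw [Pi.sup_apply]
        by_cases h1 : ∃ j, R.a j = e'
        · obtain ⟨j, rfl⟩ := h1
          have hval := Zt_A (x := x) (A := A) ⟨j, he'⟩
          have hAe : A ⟨j, he'⟩ = R.a j := rfl
          rw [hAe] at hval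
          rw [hval, hxa']
          omega
        · by_cases h2 : ∃ j, R.c j = e'
          · obtain ⟨j, rfl⟩ := h2
            rw [Zt_O (x := x) (A := A) (fun i hi => h1 ⟨i.1, hi⟩), hxc']
            have := hxcpos j
            omega
          · rw [Zt_O (x := x) (A := A) (fun i hi => h1 ⟨i.1, hi⟩),
              hxo' e' (fun j hj => h1 ⟨j, hj⟩) (fun j hj => h2 ⟨j, hj⟩)]
            omega
      have h2 := (hM.cfF f).localDep (x ⊔ x') (Zt x A) hag e he
      rw [h2, congrFun hzt e, ← hYf e he]
    · -- no new interest at f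
      intro e he hea halt hint
      obtain ⟨z', hz'b, hz'lt, hz'ag, hz'C⟩ := hint
      have hxYe : x' e = Ys x A Cc e := hYf e he
      set zh : E → ℕ := fun e' => if e' = e then z' e else Ys x A Cc e' with hzh
      have hzhb : inBox M.b zh := by
        intro e'
        by_cases h : e' = e
        · subst h; simp only [hzh, if_pos rfl]; exact hz'b e'
        · simp only [hzh, if_neg h]
          by_cases h1 : ∃ i, A i = e'
          · obtain ⟨i, rfl⟩ := h1; rw [Ys_A hACd]; exact habf i
          · by_cases h2 : ∃ i, Cc i = e'
            · obtain ⟨i, rfl⟩ := h2; rw [Ys_C hACd]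
              exact le_trans (Nat.sub_le _ _) (hxb _)
            · rw [Ys_O (fun i hi => h1 ⟨i, hi⟩) (fun i hi => h2 ⟨i, hi⟩)]
              exact hxb e'
      have haltf : (∃ i, Cc i = e) ∨ NI M.b (M.Cf f) x e := by
        rcases halt with ⟨j, hj⟩ | hni
        · left
          refine ⟨⟨j, ?_⟩, hj⟩
          rw [hef j, hj]
          exact he
        · exact Or.inr (ni_of_not_interesting (hM.cfF f) hni)
      have heaf : ∀ i, A i ≠ e := fun i => hea i.1
      have hNIv := firm_NI (hM.cfF f) hxb (haccF f) hAinj hCinj hACd haincf hcincf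
        habf hcposf hlegf he heaf haltf zh hzhb
        (by intro e' h; simp only [hzh, if_neg h])
        (by simp only [hzh, if_pos rfl]; omega)
      have h2 := (hM.cfF f).localDep z' zh
        (by
          intro e' he'
          by_cases h : e' = e
          · subst h; simp only [hzh, if_pos rfl]
          · simp only [hzh, if_neg h]
            rw [hz'ag e' h, hYf e' he']) e he
      rw [h2, congrFun hNIv e] at hz'C
      omega
  -- final assembly
  refine ⟨⟨⟨hx'b, ?_, ?_⟩, ?_⟩, ?_, ?_⟩
  · intro w
    funext e
    by_cases he : M.incW w e
    · exact (workerMain w).1 e he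
    · exact (hM.cfW w).offId x' e he
  · intro f
    funext e
    by_cases he : M.incF f e
    · exact (firmMain f).1 e he
    · exact (hM.cfF f).offId x' e he
  · rintro e ⟨hIW, hIF⟩
    by_cases hce : ∃ j, R.c j = e
    · obtain ⟨j0, hj0⟩ := hce
      exact (firmMain (M.ef e)).2.2 e rfl
        (fun j hj => hac j j0 (hj.trans hj0.symm)) (Or.inl ⟨j0, hj0⟩) hIF
    · have hIntFx : Interesting M.b (M.Cf (M.ef e)) x e := by
        by_cases hae : ∃ j, R.a j = e
        · obtain ⟨j, rfl⟩ := hae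
          exact hufpos j
        · by_contra hni
          exact (firmMain (M.ef e)).2.2 e rfl (fun j hj => hae ⟨j, hj⟩)
            (Or.inr hni) hIF
      exact (workerMain (M.ew e)).2 e rfl hIntFx hIW
  · intro heq
    have h0 := congrFun heq (R.a ⟨0, R.hk⟩)
    rw [hxa'] at h0
    omega
  · intro f e he
    exact (firmMain f).2.1 e he

end SGMMStmt
end
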